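/- arXiv:1807.04019 — 2 statements merged into one kernel-verified Lean document; each statement's English description precedes it below -/
import Mathlib

section
/- Assume m ≥ 3 and r ≥ 1. Then for P̄-almost every environment ω, P_ω^0[S_n^{(1)} = S_n^{(2)} = S_n^{(3)} = Z_n^{(1)} for infinitely many n] = 0; that is, almost surely the walks S^{(1)}, S^{(2)}, S^{(3)}, Z^{(1)} meet simultaneously only a finite number of times (and a fortiori so do S^{(1)}, ..., S^{(m)}, Z^{(1)}, ..., Z^{(r)}). -/
/-!
Fix the environment. The time-`n` marginals of independent walks multiply, so the probability
that three simple random walks and a fourth nearest-neighbour walk sit at a common site at time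
`n` is `∑_y p_n(y)³ q_n(y) ≤ (max_y p_n(y))³`, where `p_n` is the law of the simple random walk
and `q_n` that of the fourth walk. As `max_y p_n(y) = binom(n, ⌊n/2⌋) 2⁻ⁿ = O(n^{-1/2})`, these
probabilities are summable, and the Borel–Cantelli lemma shows that the four walks meet only
finitely often, whatever the environment.
-/

open MeasureTheory ProbabilityTheory Filter Set
open scoped ENNReal NNReal

noncomputable section

/-- The quenched joint law of `d` independent nearest-neighbour random walks on `ℤ`,
the `j`-th walk evolving in the environment `es j` and started at `start j`. -/
def IsIndepWalksLaw {d : ℕ} (es : Fin d → ℤ → ℝ) (start : Fin d → ℤ)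
    (P : MeasureTheory.Measure (ℕ → Fin d → ℤ)) : Prop :=
  MeasureTheory.IsProbabilityMeasure P ∧
  P {F | F 0 = start} = 1 ∧
  ∀ (n : ℕ) (g : ℕ → Fin d → ℤ) (ξ : Fin d → Bool),
    P {F | (∀ i ≤ n, F i = g i) ∧ F (n + 1) = fun j => g n j + (if ξ j then 1 else -1)}
      = (∏ j, ENNReal.ofReal (if ξ j then es j (g n j) else 1 - es j (g n j)))
        * P {F | ∀ i ≤ n, F i = g i}

namespace Nat

lemma centralBinom_sq_mul_succ_le (n : ℕ) : centralBinom n ^ 2 * (n + 1) ≤ 16 ^ n := by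
  induction n with
  | zero => simp
  | succ n ih =>
    have hrec := succ_mul_centralBinom_succ n
    refine Nat.le_of_mul_le_mul_left ?_ (by positivity : 0 < (n + 1) ^ 3)
    calc (n + 1) ^ 3 * (centralBinom (n + 1) ^ 2 * (n + 1 + 1))
        = 4 * (2 * n + 1) ^ 2 * (n + 2) * (centralBinom n ^ 2 * (n + 1)) := by
          linear_combination (n + 1) * (n + 2) * (congrArg (· ^ 2) hrec)
      _ ≤ 4 * (2 * n + 1) ^ 2 * (n + 2) * 16 ^ n := Nat.mul_le_mul_left _ ih
      _ ≤ 16 * (n + 1) ^ 3 * 16 ^ n := Nat.mul_le_mul_right _ (by nlinarith)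
      _ = (n + 1) ^ 3 * 16 ^ (n + 1) := by ring

lemma choose_half_sq_mul_le (n : ℕ) : n.choose (n / 2) ^ 2 * (n + 2) ≤ 2 * 4 ^ n := by
  obtain ⟨k, rfl | rfl⟩ := even_or_odd' n
  · have := centralBinom_sq_mul_succ_le k
    rw [show 2 * k / 2 = k by omega, ← centralBinom_eq_two_mul_choose, pow_mul]
    norm_num
    linarith
  · have hk : (2 * k + 1).choose k * 2 = centralBinom (k + 1) := by
      rw [centralBinom_eq_two_mul_choose, show 2 * (k + 1) = 2 * k + 1 + 1 by ring,
        choose_succ_succ', choose_symm_half]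
      ring
    have := centralBinom_sq_mul_succ_le (k + 1)
    rw [← hk] at this
    rw [show (2 * k + 1) / 2 = k by omega, show 4 ^ (2 * k + 1) = 4 * 16 ^ k by
      rw [pow_succ, pow_mul]; ring]
    rw [mul_pow, pow_succ 16] at this
    nlinarith

end Nat

namespace ENNReal

lemma prod_tsum {α : Type*} {k : ℕ} (f : Fin k → α → ℝ≥0∞) :
    ∏ j, ∑' x, f j x = ∑' v : Fin k → α, ∏ j, f j (v j) := by
  induction k with
  | zero => simp
  | succ k ih =>
    rw [← (Fin.consEquiv fun _ => α).tsum_eq, ENNReal.tsum_prod', Fin.prod_univ_succ,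
      ih (fun j => f j.succ), ← ENNReal.tsum_mul_right]
    refine tsum_congr fun x => ?_
    rw [← ENNReal.tsum_mul_left]
    simp [Fin.prod_univ_succ]

end ENNReal

section InitialSegment

variable {α : Type*}

def initialSegment (n : ℕ) (F : ℕ → α) : Fin (n + 1) → α := fun i => F i

lemma preimage_initialSegment_singleton (n : ℕ) (F₀ : ℕ → α) :
    initialSegment n ⁻¹' {initialSegment n F₀} = {F | ∀ i ≤ n, F i = F₀ i} := by
  ext F
  simp [initialSegment, funext_iff, Fin.forall_iff]

lemma measurable_initialSegment [MeasurableSpace α] (n : ℕ) :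
    Measurable (initialSegment (α := α) n) :=
  measurable_pi_lambda _ fun _ => measurable_pi_apply _

lemma measurableSet_setOf_forall_le_eq [MeasurableSpace α] [MeasurableSingletonClass α]
    (g : ℕ → α) (n : ℕ) :
    MeasurableSet {F : ℕ → α | ∀ i ≤ n, F i = g i} := by
  rw [← preimage_initialSegment_singleton]
  exact measurable_initialSegment n (measurableSet_singleton _)

end InitialSegment

lemma measure_eval_mem_eq_tsum {β : Type*} [MeasurableSpace β] [MeasurableSingletonClass β]
    [Countable β] (μ : Measure (ℕ → β)) (n : ℕ) (S : Set β) :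
    μ {F | F n ∈ S} = ∑' v, S.indicator (fun v => μ {F | F n = v}) v := by
  rw [← tsum_subtype]
  exact (tsum_measure_preimage_singleton S.to_countable
    fun v _ => measurable_pi_apply n (measurableSet_singleton v)).symm

namespace NearestNeighbourWalk

def stepKernel (e : ℤ → ℝ) (x y : ℤ) : ℝ≥0∞ :=
  if y = x + 1 then ENNReal.ofReal (e x) else if y = x - 1 then ENNReal.ofReal (1 - e x) else 0

def walkLaw (e : ℤ → ℝ) : ℕ → ℤ → ℝ≥0∞
  | 0, y => if y = 0 then 1 else 0
  | n + 1, y => ∑' x, walkLaw e n x * stepKernel e x y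

variable {e : ℤ → ℝ}

lemma stepKernel_add_ite (x : ℤ) (b : Bool) :
    stepKernel e x (x + if b then 1 else -1) = ENNReal.ofReal (if b then e x else 1 - e x) := by
  cases b <;> simp [stepKernel, sub_eq_add_neg]

lemma stepKernel_add_one_add_sub_one {x : ℤ} (hx : e x ∈ Icc 0 1) :
    stepKernel e x (x + 1) + stepKernel e x (x - 1) = 1 := by
  rw [stepKernel, stepKernel, if_pos rfl, if_neg (by omega), if_pos rfl,
    ← ENNReal.ofReal_add hx.1 (sub_nonneg.2 hx.2), add_sub_cancel, ENNReal.ofReal_one]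

lemma stepKernel_eq_zero {x y : ℤ} (h₁ : y ≠ x + 1) (h₂ : y ≠ x - 1) : stepKernel e x y = 0 := by
  simp [stepKernel, h₁, h₂]

lemma tsum_stepKernel {x : ℤ} (hx : e x ∈ Icc 0 1) : ∑' y, stepKernel e x y = 1 := by
  rw [tsum_eq_sum (s := {x + 1, x - 1}), Finset.sum_pair (by omega),
    stepKernel_add_one_add_sub_one hx]
  intro y hy
  simp only [Finset.mem_insert, Finset.mem_singleton, not_or] at hy
  exact stepKernel_eq_zero hy.1 hy.2

lemma tsum_mul_stepKernel (f : ℤ → ℝ≥0∞) (y : ℤ) :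
    ∑' x, f x * stepKernel e x y
      = f (y - 1) * ENNReal.ofReal (e (y - 1)) + f (y + 1) * ENNReal.ofReal (1 - e (y + 1)) := by
  rw [tsum_eq_sum (s := {y - 1, y + 1}), Finset.sum_pair (by omega)]
  · simp [stepKernel, show y ≠ y + 1 + 1 by omega]
  · intro x hx
    simp only [Finset.mem_insert, Finset.mem_singleton, not_or] at hx
    rw [stepKernel_eq_zero (by omega) (by omega), mul_zero]

lemma tsum_walkLaw (he : ∀ x, e x ∈ Icc 0 1) (n : ℕ) : ∑' y, walkLaw e n y = 1 := by
  induction n with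
  | zero => simp [walkLaw]
  | succ n ih =>
    calc ∑' y, ∑' x, walkLaw e n x * stepKernel e x y
        = ∑' x, walkLaw e n x * ∑' y, stepKernel e x y := by
          rw [ENNReal.tsum_comm]; simp only [ENNReal.tsum_mul_left]
      _ = 1 := by simp only [tsum_stepKernel (he _), mul_one, ih]

def srwPathCount : ℕ → ℤ → ℕ
  | 0, y => if y = 0 then 1 else 0
  | n + 1, y => srwPathCount n (y - 1) + srwPathCount n (y + 1)

lemma srwPathCount_eq_zero (n : ℕ) (y : ℤ) (hy : ∀ k : ℕ, y ≠ n - 2 * k) :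
    srwPathCount n y = 0 := by
  induction n generalizing y with
  | zero => simpa [srwPathCount] using hy 0
  | succ n ih =>
    simp only [srwPathCount, Nat.add_eq_zero_iff]
    exact ⟨ih _ fun k => by have := hy k; push_cast at this; omega,
      ih _ fun k => by have := hy (k + 1); push_cast at this; omega⟩

lemma srwPathCount_sub_two_mul (n k : ℕ) : srwPathCount n (n - 2 * k) = n.choose k := by
  induction n generalizing k with
  | zero => cases k <;> simp [srwPathCount]; omega
  | succ n ih =>
    rw [srwPathCount, show ((n + 1 : ℕ) : ℤ) - 2 * k - 1 = n - 2 * k by push_cast; ring, ih]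
    cases k with
    | zero =>
      rw [srwPathCount_eq_zero n _ fun k => by push_cast; omega]
      simp
    | succ k =>
      rw [show ((n + 1 : ℕ) : ℤ) - 2 * (k + 1 : ℕ) + 1 = n - 2 * k by push_cast; ring, ih,
        Nat.choose_succ_succ', add_comm]

lemma srwPathCount_le_choose_half (n : ℕ) (y : ℤ) : srwPathCount n y ≤ n.choose (n / 2) := by
  by_cases hy : ∃ k : ℕ, y = n - 2 * k
  · obtain ⟨k, rfl⟩ := hy
    rw [srwPathCount_sub_two_mul]
    exact Nat.choose_le_middle k n
  · simp [srwPathCount_eq_zero n y fun k h => hy ⟨k, h⟩]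

lemma walkLaw_half (n : ℕ) (y : ℤ) :
    walkLaw (fun _ => 1 / 2) n y = ENNReal.ofReal (srwPathCount n y / 2 ^ n) := by
  induction n generalizing y with
  | zero => by_cases hy : y = 0 <;> simp [walkLaw, srwPathCount, hy]
  | succ n ih =>
    rw [walkLaw, tsum_mul_stepKernel, ih, ih, ← ENNReal.ofReal_mul (by positivity),
      ← ENNReal.ofReal_mul (by positivity), ← ENNReal.ofReal_add (by positivity) (by positivity)]
    congr 1
    simp only [srwPathCount, Nat.cast_add, pow_succ]
    ring

def srwPeak (n : ℕ) : ℝ := n.choose (n / 2) / 2 ^ n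

lemma walkLaw_half_le_srwPeak (n : ℕ) (y : ℤ) :
    walkLaw (fun _ => 1 / 2) n y ≤ ENNReal.ofReal (srwPeak n) := by
  rw [walkLaw_half, srwPeak]
  gcongr
  exact_mod_cast srwPathCount_le_choose_half n y

lemma srwPeak_nonneg (n : ℕ) : 0 ≤ srwPeak n := by unfold srwPeak; positivity

lemma srwPeak_sq_le (n : ℕ) : srwPeak n ^ 2 ≤ 2 / (n + 2) := by
  have h : ((n.choose (n / 2) ^ 2 * (n + 2) : ℕ) : ℝ) ≤ (2 * 4 ^ n : ℕ) :=
    Nat.cast_le.2 (Nat.choose_half_sq_mul_le n)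
  rw [srwPeak, div_pow, div_le_div_iff₀ (by positivity) (by positivity), ← pow_mul,
    mul_comm n 2, pow_mul]
  push_cast at h
  norm_num
  linarith

lemma srwPeak_le_one (n : ℕ) : srwPeak n ≤ 1 := by
  have h := srwPeak_sq_le n
  have : (2 : ℝ) / (n + 2) ≤ 1 := by
    rw [div_le_one (by positivity)]
    linarith [n.cast_nonneg (α := ℝ)]
  nlinarith [srwPeak_nonneg n]

lemma summable_srwPeak_pow_three : Summable fun n => srwPeak n ^ 3 := by
  have hsum : Summable fun n : ℕ => (2 : ℝ) ^ (3 / 2 : ℝ) * (((n + 2 : ℕ) : ℝ) ^ (3 / 2 : ℝ))⁻¹ :=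
    ((Real.summable_nat_rpow_inv.2 (by norm_num)).comp_injective
      (add_left_injective 2)).mul_left _
  refine hsum.of_nonneg_of_le (fun n => pow_nonneg (srwPeak_nonneg n) 3) fun n => ?_
  calc srwPeak n ^ 3 = (srwPeak n ^ 2) ^ (3 / 2 : ℝ) := by
        rw [← Real.rpow_natCast, ← Real.rpow_natCast, ← Real.rpow_mul (srwPeak_nonneg n)]
        norm_num
    _ ≤ (2 / (n + 2 : ℝ)) ^ (3 / 2 : ℝ) := by
        gcongr
        exact srwPeak_sq_le n
    _ = _ := by
        rw [Real.div_rpow (by norm_num) (by positivity), div_eq_mul_inv]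
        push_cast
        rfl

variable {d : ℕ}

def neighbour (x : Fin d → ℤ) (ξ : Fin d → Bool) : Fin d → ℤ :=
  fun j => x j + if ξ j then 1 else -1

lemma neighbour_injective (x : Fin d → ℤ) : Function.Injective (neighbour x) := by
  intro ξ ξ' h
  funext j
  have := congrFun h j
  simp only [neighbour] at this
  revert this
  cases ξ j <;> cases ξ' j <;> simp

variable {es : Fin d → ℤ → ℝ}

lemma sum_prod_stepKernel_neighbour (hes : ∀ j x, es j x ∈ Icc 0 1) (x : Fin d → ℤ) :
    ∑ ξ, ∏ j, stepKernel (es j) (x j) (neighbour x ξ j) = 1 := by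
  simp only [neighbour, stepKernel_add_ite]
  rw [← Fintype.prod_sum fun j (b : Bool) =>
    ENNReal.ofReal (if b then es j (x j) else 1 - es j (x j))]
  refine Finset.prod_eq_one fun j _ => ?_
  rw [Fintype.sum_bool, if_pos rfl, if_neg Bool.false_ne_true,
    ← ENNReal.ofReal_add (hes j (x j)).1 (sub_nonneg.2 (hes j (x j)).2), add_sub_cancel,
    ENNReal.ofReal_one]

lemma prod_stepKernel_eq_zero {x v : Fin d → ℤ} (hv : ∀ ξ, neighbour x ξ ≠ v) :
    ∏ j, stepKernel (es j) (x j) (v j) = 0 := by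
  by_contra hne
  apply hv fun j => decide (v j = x j + 1)
  funext j
  have hj := Finset.prod_ne_zero_iff.1 hne j (Finset.mem_univ j)
  by_cases h : v j = x j + 1
  · simp [neighbour, h]
  · have : v j = x j - 1 := by_contra fun h' => hj (stepKernel_eq_zero h h')
    simp [neighbour, this, sub_eq_add_neg]

end NearestNeighbourWalk

namespace IsIndepWalksLaw

open NearestNeighbourWalk

variable {d : ℕ} {es : Fin d → ℤ → ℝ} {start : Fin d → ℤ} {P : Measure (ℕ → Fin d → ℤ)}

lemma measure_cylinder_inter_neighbour (hP : IsIndepWalksLaw es start P)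
    (g : ℕ → Fin d → ℤ) (n : ℕ) (ξ : Fin d → Bool) :
    P ({F | ∀ i ≤ n, F i = g i} ∩ {F | F (n + 1) = neighbour (g n) ξ})
      = (∏ j, stepKernel (es j) (g n j) (neighbour (g n) ξ j)) * P {F | ∀ i ≤ n, F i = g i} := by
  simp only [neighbour, stepKernel_add_ite]
  exact hP.2.2 n g ξ

lemma measure_cylinder_inter_eval_succ_eq_zero (hP : IsIndepWalksLaw es start P)
    (hes : ∀ j x, es j x ∈ Icc 0 1) (g : ℕ → Fin d → ℤ) (n : ℕ) {v : Fin d → ℤ}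
    (hv : ∀ ξ, neighbour (g n) ξ ≠ v) :
    P ({F | ∀ i ≤ n, F i = g i} ∩ {F | F (n + 1) = v}) = 0 := by
  have := hP.1
  set C := {F : ℕ → Fin d → ℤ | ∀ i ≤ n, F i = g i}
  have hC : MeasurableSet C := measurableSet_setOf_forall_le_eq g n
  have hv' : v ∉ Finset.univ.image (neighbour (g n)) := by simpa using hv
  -- the neighbours of `g n` already carry the whole mass of the cylinder `C`
  have hsum := sum_measure_preimage_singleton (μ := P.restrict C)
    (insert v (Finset.univ.image (neighbour (g n)))) (f := fun F => F (n + 1))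
    fun w _ => measurable_pi_apply (n + 1) (measurableSet_singleton w)
  simp only [Finset.sum_insert hv', Finset.sum_image fun ξ _ ξ' _ h => neighbour_injective _ h,
    Measure.restrict_apply' hC, Set.inter_comm _ C] at hsum
  have hC_le : P (C ∩ {F | F (n + 1) = v}) + P C ≤ 0 + P C := by
    calc _ = P (C ∩ {F | F (n + 1) = v})
          + ∑ ξ, (∏ j, stepKernel (es j) (g n j) (neighbour (g n) ξ j)) * P C := by
          rw [← Finset.sum_mul, sum_prod_stepKernel_neighbour hes, one_mul]
      _ = P (C ∩ (fun F => F (n + 1)) ⁻¹' ↑(insert v (Finset.univ.image (neighbour (g n))))) := by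
          rw [← hsum]
          congr 1
          exact Finset.sum_congr rfl fun ξ _ => (measure_cylinder_inter_neighbour hP g n ξ).symm
      _ ≤ P C := measure_mono inter_subset_left
      _ = 0 + P C := (zero_add _).symm
  exact nonpos_iff_eq_zero.1 (ENNReal.le_of_add_le_add_right (measure_ne_top P C) hC_le)

lemma measure_cylinder_inter_eval_succ (hP : IsIndepWalksLaw es start P)
    (hes : ∀ j x, es j x ∈ Icc 0 1) (g : ℕ → Fin d → ℤ) (n : ℕ) (v : Fin d → ℤ) :
    P ({F | ∀ i ≤ n, F i = g i} ∩ {F | F (n + 1) = v})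
      = (∏ j, stepKernel (es j) (g n j) (v j)) * P {F | ∀ i ≤ n, F i = g i} := by
  by_cases hv : ∃ ξ, neighbour (g n) ξ = v
  · obtain ⟨ξ, rfl⟩ := hv
    exact hP.measure_cylinder_inter_neighbour g n ξ
  · push Not at hv
    rw [hP.measure_cylinder_inter_eval_succ_eq_zero hes g n hv, prod_stepKernel_eq_zero hv,
      zero_mul]

lemma measure_eval_inter_eval_succ (hP : IsIndepWalksLaw es start P)
    (hes : ∀ j x, es j x ∈ Icc 0 1) (n : ℕ) (w v : Fin d → ℤ) :
    P ({F | F n = w} ∩ {F | F (n + 1) = v})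
      = (∏ j, stepKernel (es j) (w j) (v j)) * P {F | F n = w} := by
  set s := {h : Fin (n + 1) → Fin d → ℤ | h (Fin.last n) = w}
  have hmeas : ∀ h ∈ s, MeasurableSet (initialSegment n ⁻¹' {h}) :=
    fun h _ => measurable_initialSegment n (measurableSet_singleton h)
  have hB : MeasurableSet {F : ℕ → Fin d → ℤ | F (n + 1) = v} :=
    measurableSet_eq_fun (measurable_pi_apply _) measurable_const
  have hcyl : ∀ h ∈ s, P (initialSegment n ⁻¹' {h} ∩ {F | F (n + 1) = v})
      = (∏ j, stepKernel (es j) (w j) (v j)) * P (initialSegment n ⁻¹' {h}) := by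
    intro h hh
    rcases (initialSegment n ⁻¹' {h}).eq_empty_or_nonempty with he | ⟨F₀, rfl⟩
    · simp [he]
    · rw [← hh, preimage_initialSegment_singleton]
      exact hP.measure_cylinder_inter_eval_succ hes F₀ n v
  calc P ({F | F n = w} ∩ {F | F (n + 1) = v})
      = P.restrict {F | F (n + 1) = v} (initialSegment n ⁻¹' s) := (Measure.restrict_apply' hB).symm
    _ = ∑' h : s, P (initialSegment n ⁻¹' {h.1} ∩ {F | F (n + 1) = v}) := by
        rw [← tsum_measure_preimage_singleton s.to_countable hmeas]
        exact tsum_congr fun h => Measure.restrict_apply' hB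
    _ = (∏ j, stepKernel (es j) (w j) (v j)) * ∑' h : s, P (initialSegment n ⁻¹' {h.1}) := by
        rw [← ENNReal.tsum_mul_left]
        exact tsum_congr fun h => hcyl h.1 h.2
    _ = (∏ j, stepKernel (es j) (w j) (v j)) * P {F | F n = w} := by
        rw [tsum_measure_preimage_singleton s.to_countable hmeas]
        rfl

lemma measure_eval_zero (hP : IsIndepWalksLaw es start P) (v : Fin d → ℤ) :
    P {F | F 0 = v} = if v = start then 1 else 0 := by
  have := hP.1
  split_ifs with hv
  · exact hv ▸ hP.2.1
  · refine measure_mono_null (fun F hF h0 => hv (hF.symm.trans h0))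
      ((prob_compl_eq_zero_iff (measurableSet_eq_fun (measurable_pi_apply _) measurable_const)).2
        hP.2.1)

lemma measure_eval_eq_prod (hP : IsIndepWalksLaw es (fun _ => 0) P)
    (hes : ∀ j x, es j x ∈ Icc 0 1) (n : ℕ) (v : Fin d → ℤ) :
    P {F | F n = v} = ∏ j, walkLaw (es j) n (v j) := by
  induction n generalizing v with
  | zero =>
    rw [hP.measure_eval_zero]
    simp [walkLaw, Fintype.prod_boole, funext_iff]
  | succ n ih =>
    calc P {F | F (n + 1) = v}
        = ∑' w, P ({F | F n = w} ∩ {F | F (n + 1) = v}) := by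
          have hB : MeasurableSet {F : ℕ → Fin d → ℤ | F (n + 1) = v} :=
            measurableSet_eq_fun (measurable_pi_apply _) measurable_const
          have := measure_eval_mem_eq_tsum (P.restrict {F | F (n + 1) = v}) n univ
          simp only [mem_univ, Set.ofPred_true, indicator_univ, univ_inter,
            Measure.restrict_apply' hB] at this
          exact this
      _ = ∑' w : Fin d → ℤ, ∏ j, walkLaw (es j) n (w j) * stepKernel (es j) (w j) (v j) := by
          simp only [hP.measure_eval_inter_eval_succ hes, ih, ← Finset.prod_mul_distrib, mul_comm]
      _ = ∏ j, walkLaw (es j) (n + 1) (v j) :=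
          (ENNReal.prod_tsum fun j x => walkLaw (es j) n x * stepKernel (es j) x (v j)).symm

lemma measure_forall_eval_mem (hP : IsIndepWalksLaw es (fun _ => 0) P)
    (hes : ∀ j x, es j x ∈ Icc 0 1) (n : ℕ) (A : Fin d → Set ℤ) :
    P {F | ∀ j, F n j ∈ A j} = ∏ j, ∑' x, (A j).indicator (walkLaw (es j) n) x := by
  have := measure_eval_mem_eq_tsum P n (univ.pi A)
  simp only [mem_univ_pi] at this
  rw [this, ENNReal.prod_tsum]
  classical
  refine tsum_congr fun v => ?_
  simp only [indicator_apply, mem_univ_pi, hP.measure_eval_eq_prod hes, Fintype.prod_ite_zero]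
  congr

lemma measure_forall_mem_eval_eq (hP : IsIndepWalksLaw es (fun _ => 0) P)
    (hes : ∀ j x, es j x ∈ Icc 0 1) (n : ℕ) (s : Finset (Fin d)) (y : ℤ) :
    P {F | ∀ j ∈ s, F n j = y} = ∏ j ∈ s, walkLaw (es j) n y := by
  classical
  have hA : {F : ℕ → Fin d → ℤ | ∀ j ∈ s, F n j = y}
      = {F | ∀ j, F n j ∈ if j ∈ s then {y} else univ} := by
    ext F
    refine forall_congr' fun j => ?_
    split_ifs <;> simp [*]
  rw [hA, hP.measure_forall_eval_mem hes, ← Fintype.prod_ite_mem s]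
  refine Finset.prod_congr rfl fun j _ => ?_
  split_ifs
  · simp
  · simp [tsum_walkLaw (hes j)]

lemma measure_forall_mem_eval_eq_eval_le (hP : IsIndepWalksLaw es (fun _ => 0) P)
    (hes : ∀ j x, es j x ∈ Icc 0 1) {T : Finset (Fin d)}
    (hsrw : ∀ j ∈ T, es j = fun _ => 1 / 2) {k : Fin d} (hk : k ∉ T) (n : ℕ) :
    P {F | ∀ j ∈ T, F n j = F n k} ≤ ENNReal.ofReal (srwPeak n) ^ T.card := by
  calc P {F | ∀ j ∈ T, F n j = F n k}
      ≤ P (⋃ y, {F | ∀ j ∈ insert k T, F n j = y}) :=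
        measure_mono fun F hF => mem_iUnion.2 ⟨F n k, by simpa using hF⟩
    _ ≤ ∑' y, walkLaw (es k) n y * ∏ j ∈ T, walkLaw (es j) n y := by
        refine (measure_iUnion_le _).trans_eq (tsum_congr fun y => ?_)
        rw [hP.measure_forall_mem_eval_eq hes, Finset.prod_insert hk]
    _ ≤ ∑' y, walkLaw (es k) n y * ENNReal.ofReal (srwPeak n) ^ T.card := by
        gcongr with y
        refine Finset.prod_le_pow_card _ _ _ fun j hj => ?_
        rw [hsrw j hj]
        exact walkLaw_half_le_srwPeak n y
    _ = ENNReal.ofReal (srwPeak n) ^ T.card := by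
        rw [ENNReal.tsum_mul_right, tsum_walkLaw (hes k), one_mul]

lemma measure_setOf_infinite_meetings_eq_zero (hP : IsIndepWalksLaw es (fun _ => 0) P)
    (hes : ∀ j x, es j x ∈ Icc 0 1) {T : Finset (Fin d)} (hT : 3 ≤ T.card)
    (hsrw : ∀ j ∈ T, es j = fun _ => 1 / 2) {k : Fin d} (hk : k ∉ T) :
    P {F | {n | ∀ j ∈ T, F n j = F n k}.Infinite} = 0 := by
  have hbound : ∀ n, P {F | ∀ j ∈ T, F n j = F n k} ≤ ENNReal.ofReal (srwPeak n ^ 3) := by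
    intro n
    rw [ENNReal.ofReal_pow (srwPeak_nonneg n)]
    exact (hP.measure_forall_mem_eval_eq_eval_le hes hsrw hk n).trans
      (pow_le_pow_of_le_one zero_le (ENNReal.ofReal_le_one.2 (srwPeak_le_one n)) hT)
  have hsum : ∑' n, P {F | ∀ j ∈ T, F n j = F n k} ≠ ∞ := by
    refine ne_top_of_le_ne_top ?_ (ENNReal.tsum_le_tsum hbound)
    rw [← ENNReal.ofReal_tsum_of_nonneg (fun n => pow_nonneg (srwPeak_nonneg n) 3)
      summable_srwPeak_pow_three]
    exact ENNReal.ofReal_ne_top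
  refine measure_mono_null (fun F hF => ?_) (measure_limsup_atTop_eq_zero hsum)
  exact mem_limsup_iff_frequently_mem.2 (Nat.frequently_atTop_iff_infinite.2 hF)

end IsIndepWalksLaw

/-- **Theorem 1.2 (i)**. If `m ≥ 3` and `r ≥ 1`, then for almost every environment, the
three simple random walks `S⁽¹⁾, S⁽²⁾, S⁽³⁾` and the RWRE `Z⁽¹⁾` meet simultaneously only a
finite number of times, almost surely. -/
theorem finitely_many_meetings_three_srw_one_rwre
    {Ω : Type*} [MeasurableSpace Ω] (Pbar : Measure Ω)
    (m r : ℕ)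
    (env : Fin r → ℤ → Ω → ℝ)
    (henv : ∀ j x a, env j x a ∈ Set.Ioo (0 : ℝ) 1)
    -- quenched joint law of the `m` SRW and the `r` RWRE, all started at `0`:
    (PY : Ω → Measure (ℕ → Fin (m + r) → ℤ))
    (hPY : ∀ a, IsIndepWalksLaw
      (fun i : Fin (m + r) =>
        if h : (i : ℕ) < m then (fun _ : ℤ => (1 : ℝ) / 2)
        else (fun x : ℤ => env ⟨(i : ℕ) - m, by have := i.isLt; omega⟩ x a))
      (fun _ => 0) (PY a))
    (hm : 3 ≤ m) (hr : 1 ≤ r) :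
    ∀ᵐ a ∂Pbar, PY a
      {F | {n : ℕ |
        F n ⟨0, by omega⟩ = F n ⟨1, by omega⟩ ∧
        F n ⟨1, by omega⟩ = F n ⟨2, by omega⟩ ∧
        F n ⟨2, by omega⟩ = F n ⟨m, by omega⟩}.Infinite} = 0 := by
  refine ae_of_all _ fun a => ?_
  let T : Finset (Fin (m + r)) := {⟨0, by omega⟩, ⟨1, by omega⟩, ⟨2, by omega⟩}
  have hT : ∀ j ∈ T, (j : ℕ) < 3 := by simp [T]
  refine measure_mono_null (fun F hF => hF.mono fun n hn => ?_)
    ((hPY a).measure_setOf_infinite_meetings_eq_zero (T := T) (k := ⟨m, by omega⟩) ?_ ?_ ?_ ?_)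
  · obtain ⟨h₀₁, h₁₂, h₂₃⟩ := hn
    simp only [T, Finset.mem_insert, Finset.mem_singleton, forall_eq_or_imp, forall_eq]
    exact ⟨h₀₁.trans (h₁₂.trans h₂₃), h₁₂.trans h₂₃, h₂₃⟩
  · intro j x
    split_ifs
    · norm_num
    · exact Ioo_subset_Icc_self (henv _ x a)
  · simp [T, Fin.ext_iff]
  · exact fun j hj => dif_pos ((hT j hj).trans_le hm)
  · exact fun hk => (hT _ hk).not_ge hm
end
end

section
/- Let (Z_n)_{n≥0} be a time-homogeneous Markov chain on a countable state space, let a ≠ b be two states, and let P^b denote the law of the chain started at b. Then for every k ∈ ℕ: P^b[τ(a) = k] ≤ P^b[τ(a) < τ(b)], where τ(x) := inf{ n ≥ 1 : Z_n = x }. -/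
open MeasureTheory Set
open scoped ENNReal

/-!
Decompose `{τ(a) = k}` according to the last visit `j < k` to `b`, which exists almost surely
since `Z₀ = b`. By the Markov property at the fixed time `j`, the piece for `j` has probability
`P^b[Z_j = b] · P^b[τ(a) = k - j < τ(b)] ≤ P^b[τ(a) = k - j < τ(b)]`, and the events
`{τ(a) = m < τ(b)}` for distinct `m` are disjoint and contained in `{τ(a) < τ(b)}`.

The path law is only specified on cylinders, so the Markov property at time `j` is obtained by
summing over the countably many cylinders that make up an event depending on finitely many
coordinates.
-/

namespace MarkovPath

variable {X : Type*}

def cyl (w : ℕ → X) (n : ℕ) : Set (ℕ → X) := {f | ∀ i ≤ n, f i = w i}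

def stopAt (n : ℕ) (f : ℕ → X) : ℕ → X := fun i => f (min i n)

def shift (j : ℕ) (f : ℕ → X) : ℕ → X := fun i => f (j + i)

def append (j : ℕ) (u v : ℕ → X) : ℕ → X := fun i => if i ≤ j then u i else v (i - j)

lemma cyl_succ (w : ℕ → X) (n : ℕ) :
    cyl w (n + 1) = {f | (∀ i ≤ n, f i = w i) ∧ f (n + 1) = w (n + 1)} := by
  ext f
  simp only [cyl, mem_ofPred_eq, Nat.le_succ_iff]
  constructor
  · intro h
    exact ⟨fun i hi => h i (Or.inl hi), h _ (Or.inr rfl)⟩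
  · rintro ⟨h, hn⟩ i (hi | rfl)
    exacts [h i hi, hn]

lemma cyl_append_self (j : ℕ) (u v : ℕ → X) : cyl (append j u v) j = cyl u j := by
  ext f
  simp +contextual [cyl, append]

lemma append_add {j : ℕ} {u v : ℕ → X} (h : v 0 = u j) (i : ℕ) :
    append j u v (j + i) = v i := by
  rcases Nat.eq_zero_or_pos i with rfl | hi
  · simp [append, h]
  · simp [append, show ¬ j + i ≤ j by omega]

lemma cyl_inter_shift_cyl {j m : ℕ} {u v : ℕ → X} (h : v 0 = u j) :
    cyl u j ∩ shift j ⁻¹' cyl v m = cyl (append j u v) (j + m) := by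
  ext f
  simp only [cyl, shift, mem_inter_iff, mem_preimage, mem_ofPred_eq]
  constructor
  · rintro ⟨hu, hv⟩ i hi
    by_cases hij : i ≤ j
    · simp [append, hij, hu i hij]
    · obtain ⟨l, rfl⟩ := Nat.exists_eq_add_of_le (le_of_not_ge hij)
      rw [append_add h]
      exact hv l (by omega)
  · intro hf
    refine ⟨fun i hi => by simpa [append, hi] using hf i (by omega), fun i hi => ?_⟩
    rw [hf (j + i) (by omega), append_add h]

lemma cyl_inter_shift_cyl_eq_empty {j m : ℕ} {u v : ℕ → X} (h : v 0 ≠ u j) :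
    cyl u j ∩ shift j ⁻¹' cyl v m = ∅ := by
  refine eq_empty_of_forall_notMem fun f ⟨hu, hv⟩ => h ?_
  have := hv 0 (Nat.zero_le m)
  simp only [shift, add_zero] at this
  rw [← this, hu j le_rfl]

lemma stopAt_eq_self_of_mem_range {n : ℕ} {u : ℕ → X} (hu : u ∈ range (stopAt n)) :
    stopAt n u = u := by
  obtain ⟨g, rfl⟩ := hu
  ext i
  simp [stopAt]

lemma preimage_stopAt_singleton {n : ℕ} {u : ℕ → X} (hu : u ∈ range (stopAt n)) :
    stopAt n ⁻¹' {u} = cyl u n := by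
  ext f
  conv_lhs => rw [mem_preimage, mem_singleton_iff, ← stopAt_eq_self_of_mem_range hu]
  simp only [stopAt, funext_iff, cyl, mem_ofPred_eq]
  constructor
  · intro h i hi
    simpa [hi] using h i
  · intro h i
    exact h _ (min_le_right i n)

lemma preimage_stopAt_image {n : ℕ} {A : Set (ℕ → X)} (hA : DependsOn (· ∈ A) (Iic n)) :
    stopAt n ⁻¹' (stopAt n '' A) = A := by
  refine Subset.antisymm ?_ (subset_preimage_image _ _)
  rintro f ⟨g, hg, hgf⟩
  have : (g ∈ A) = (f ∈ A) := hA fun i (hi : i ≤ n) => by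
    simpa [stopAt, hi] using congrFun hgf i
  exact this ▸ hg

lemma image_stopAt_subset {n : ℕ} {A : Set (ℕ → X)} (hA : DependsOn (· ∈ A) (Iic n)) :
    stopAt n '' A ⊆ A := by
  intro u hu
  rw [← preimage_stopAt_image hA, mem_preimage,
    stopAt_eq_self_of_mem_range (image_subset_range _ _ hu)]
  exact hu

lemma countable_range_stopAt [Countable X] (n : ℕ) :
    (range (stopAt n : (ℕ → X) → ℕ → X)).Countable := by
  refine (countable_range fun g : Iic n → X => fun i => g ⟨min i n, min_le_right i n⟩).mono ?_
  rintro _ ⟨f, rfl⟩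
  exact ⟨(Iic n).domRestrict f, rfl⟩

-- With `τ(x) = inf {n ≥ 1 | Z_n = x}`: `firstHitAt a k = {τ(a) = k}`, and for `a ≠ b`,
-- `firstHitAtBefore a b m = {τ(a) = m < τ(b)}`.
def firstHitAt (a : X) (k : ℕ) : Set (ℕ → X) :=
  {f | 1 ≤ k ∧ f k = a ∧ ∀ i, 1 ≤ i → i < k → f i ≠ a}

def firstHitAtBefore (a b : X) (m : ℕ) : Set (ℕ → X) :=
  {f | f ∈ firstHitAt a m ∧ ∀ i, 1 ≤ i → i ≤ m → f i ≠ b}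

lemma dependsOn_setOf_apply_eq (j : ℕ) (b : X) :
    DependsOn (· ∈ {f : ℕ → X | f j = b}) (Iic j) := fun f g h => by
  simp [h j (mem_Iic.mpr le_rfl)]

lemma dependsOn_firstHitAtBefore (a b : X) (m : ℕ) :
    DependsOn (· ∈ firstHitAtBefore a b m) (Iic m) := by
  intro f g hfg
  have h : ∀ i ≤ m, f i = g i := hfg
  simp only [firstHitAtBefore, firstHitAt, mem_ofPred_eq, eq_iff_iff]
  grind

lemma pairwise_disjoint_firstHitAt (a : X) :
    Pairwise (Function.onFun Disjoint (firstHitAt a : ℕ → Set (ℕ → X))) := by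
  intro k l hkl
  refine disjoint_left.mpr fun f ⟨hk, hka, hk'⟩ ⟨hl, hla, hl'⟩ => ?_
  rcases hkl.lt_or_gt with h | h
  exacts [hl' k hk h hka, hk' l hl h hla]

lemma firstHitAt_inter_subset {a b : X} (hab : a ≠ b) (k : ℕ) :
    firstHitAt a k ∩ {f | f 0 = b}
      ⊆ ⋃ j ∈ Finset.range k,
          {f | f j = b} ∩ shift j ⁻¹' firstHitAtBefore a b (k - j) := by
  classical
  rintro f ⟨⟨hk, hka, hna⟩, hb⟩
  set j := Nat.findGreatest (fun i => f i = b) (k - 1)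
  have hjb : f j = b := Nat.findGreatest_spec (P := fun i => f i = b) (Nat.zero_le _) hb
  have hjk : j < k := by have := Nat.findGreatest_le (P := fun i => f i = b) (k - 1); omega
  have hnb : ∀ i, j < i → i < k → f i ≠ b := fun i hji hik =>
    Nat.findGreatest_is_greatest (P := fun i => f i = b) hji (by omega)
  refine mem_biUnion (Finset.mem_range.mpr hjk)
    ⟨hjb, ⟨by omega, ?_, fun i hi hik => ?_⟩, fun i hi hik => ?_⟩
  · simp only [shift, Nat.add_sub_cancel' hjk.le, hka]
  · exact hna (j + i) (by omega) (by omega)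
  · rcases (show j + i < k ∨ j + i = k by omega) with h | h
    · exact hnb (j + i) (by omega) h
    · simp only [shift, h, hka]
      exact hab

lemma sum_range_sub_le_tsum (g : ℕ → ℝ≥0∞) (k : ℕ) :
    ∑ j ∈ Finset.range k, g (k - j) ≤ ∑' m, g m := by
  rw [← Finset.sum_image (s := Finset.range k) (g := (k - ·))
    fun i hi j hj (hij : k - i = k - j) => by
      simp only [Finset.coe_range, mem_Iio] at hi hj; omega]
  exact ENNReal.sum_le_tsum _

section Measurable

variable [MeasurableSpace X]

lemma measurable_stopAt (n : ℕ) : Measurable (stopAt n : (ℕ → X) → ℕ → X) := by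
  unfold stopAt; fun_prop

lemma measurable_shift (j : ℕ) : Measurable (shift j : (ℕ → X) → ℕ → X) := by
  unfold shift; fun_prop

structure IsMarkovPathLaw (P : X → Measure (ℕ → X)) (κ : X → Measure X) : Prop where
  isProbabilityMeasure : ∀ x, IsProbabilityMeasure (P x)
  measure_start : ∀ x, P x {f | f 0 = x} = 1
  markov : ∀ (x : X) (n : ℕ) (g : ℕ → X) (z : X),
    P x {f | (∀ i ≤ n, f i = g i) ∧ f (n + 1) = z}
      = κ (g n) {z} * P x {f | ∀ i ≤ n, f i = g i}

variable {P : X → Measure (ℕ → X)} {κ : X → Measure X}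

lemma IsMarkovPathLaw.measure_cyl_zero (hP : IsMarkovPathLaw P κ) (w : ℕ → X) :
    P (w 0) (cyl w 0) = 1 := by
  simpa [cyl] using hP.measure_start (w 0)

lemma IsMarkovPathLaw.measure_cyl_succ (hP : IsMarkovPathLaw P κ) (x : X) (w : ℕ → X)
    (n : ℕ) :
    P x (cyl w (n + 1)) = κ (w n) {w (n + 1)} * P x (cyl w n) := by
  rw [cyl_succ]
  exact hP.markov x n w (w (n + 1))

lemma IsMarkovPathLaw.measure_cyl_append (hP : IsMarkovPathLaw P κ) (x : X) {j : ℕ}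
    {u v : ℕ → X} (h : v 0 = u j) (m : ℕ) :
    P x (cyl (append j u v) (j + m)) = P x (cyl u j) * P (u j) (cyl v m) := by
  induction m with
  | zero => rw [add_zero, cyl_append_self, ← h, hP.measure_cyl_zero, mul_one]
  | succ m ih =>
    rw [← add_assoc, hP.measure_cyl_succ, hP.measure_cyl_succ, ih, append_add h,
      add_assoc, append_add h, mul_left_comm]

variable [MeasurableSingletonClass X]

lemma measurableSet_cyl (w : ℕ → X) (n : ℕ) : MeasurableSet (cyl w n) := by
  unfold cyl; measurability

lemma IsMarkovPathLaw.measure_compl_start (hP : IsMarkovPathLaw P κ) (x : X) :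
    P x {f | f 0 = x}ᶜ = 0 :=
  have := hP.isProbabilityMeasure x
  (prob_compl_eq_zero_iff ((measurableSet_singleton x).preimage (measurable_pi_apply 0))).mpr
    (hP.measure_start x)

lemma IsMarkovPathLaw.measure_cyl_of_ne (hP : IsMarkovPathLaw P κ) {x : X} {w : ℕ → X}
    (h : w 0 ≠ x) (n : ℕ) :
    P x (cyl w n) = 0 :=
  measure_mono_null (fun f hf (hfx : f 0 = x) => h (hfx ▸ (hf 0 (Nat.zero_le n)).symm))
    (hP.measure_compl_start x)

lemma IsMarkovPathLaw.measure_cyl_inter_shift_cyl (hP : IsMarkovPathLaw P κ) (x : X)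
    {j m : ℕ} {u v : ℕ → X} :
    P x (cyl u j ∩ shift j ⁻¹' cyl v m) = P x (cyl u j) * P (u j) (cyl v m) := by
  by_cases h : v 0 = u j
  · rw [cyl_inter_shift_cyl h, hP.measure_cyl_append x h]
  · rw [cyl_inter_shift_cyl_eq_empty h, hP.measure_cyl_of_ne h, measure_empty, mul_zero]

variable [Countable X]

lemma measurableSet_of_dependsOn {n : ℕ} {A : Set (ℕ → X)}
    (hA : DependsOn (· ∈ A) (Iic n)) : MeasurableSet A := by
  rw [← preimage_stopAt_image hA]
  exact measurable_stopAt n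
    ((countable_range_stopAt n).mono (image_subset_range _ _)).measurableSet

lemma measure_eq_tsum_cyl (μ : Measure (ℕ → X)) {n : ℕ} {A : Set (ℕ → X)}
    (hA : DependsOn (· ∈ A) (Iic n)) : μ A = ∑' u : stopAt n '' A, μ (cyl u n) := by
  have hs : (stopAt n '' A).Countable := (countable_range_stopAt n).mono (image_subset_range _ _)
  conv_lhs => rw [← preimage_stopAt_image hA]
  rw [← tsum_measure_preimage_singleton hs]
  · refine tsum_congr fun u => ?_
    rw [preimage_stopAt_singleton (image_subset_range _ _ u.2)]
  · intro u hu
    rw [preimage_stopAt_singleton (image_subset_range _ _ hu)]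
    exact measurableSet_cyl u n

lemma IsMarkovPathLaw.measure_cyl_inter_shift (hP : IsMarkovPathLaw P κ) (x : X)
    {j m : ℕ} {u : ℕ → X} {D : Set (ℕ → X)} (hD : DependsOn (· ∈ D) (Iic m)) :
    P x (cyl u j ∩ shift j ⁻¹' D) = P x (cyl u j) * P (u j) D := by
  have hmap : ∀ B, MeasurableSet B →
      ((P x).restrict (cyl u j)).map (shift j) B = P x (cyl u j ∩ shift j ⁻¹' B) := by
    intro B hB
    rw [Measure.map_apply (measurable_shift j) hB,
      Measure.restrict_apply (measurable_shift j hB), inter_comm]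
  rw [← hmap D (measurableSet_of_dependsOn hD), measure_eq_tsum_cyl _ hD,
    measure_eq_tsum_cyl (P (u j)) hD, ← ENNReal.tsum_mul_left]
  refine tsum_congr fun v => ?_
  rw [hmap _ (measurableSet_cyl _ _), hP.measure_cyl_inter_shift_cyl]

lemma IsMarkovPathLaw.measure_inter_shift (hP : IsMarkovPathLaw P κ) (x y : X) {j m : ℕ}
    {A D : Set (ℕ → X)} (hA : DependsOn (· ∈ A) (Iic j)) (hAy : ∀ f ∈ A, f j = y)
    (hD : DependsOn (· ∈ D) (Iic m)) :
    P x (A ∩ shift j ⁻¹' D) = P x A * P y D := by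
  have hrestrict := Measure.restrict_apply (μ := P x) (s := shift j ⁻¹' D)
    (measurableSet_of_dependsOn hA)
  rw [← hrestrict, measure_eq_tsum_cyl _ hA, measure_eq_tsum_cyl (P x) hA,
    ← ENNReal.tsum_mul_right]
  refine tsum_congr fun u => ?_
  rw [Measure.restrict_apply (measurableSet_cyl _ _), hP.measure_cyl_inter_shift x hD,
    hAy u (image_stopAt_subset hA u.2)]

lemma tsum_measure_firstHitAtBefore_le (μ : Measure (ℕ → X)) (a b : X) :
    ∑' m, μ (firstHitAtBefore a b m)
      ≤ μ {f | ∃ n, 1 ≤ n ∧ f n = a ∧ ∀ i, 1 ≤ i → i ≤ n → f i ≠ b} := by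
  rw [← measure_iUnion
    (fun k l hkl =>
      (pairwise_disjoint_firstHitAt a hkl).mono (fun _ hf => hf.1) (fun _ hf => hf.1))
    (fun m => measurableSet_of_dependsOn (dependsOn_firstHitAtBefore a b m))]
  refine measure_mono (iUnion_subset fun m f ⟨⟨hm, hma, _⟩, hmb⟩ => ⟨m, hm, hma, hmb⟩)

end Measurable

end MarkovPath

open MarkovPath

theorem hitting_time_pointwise_bound_general
    {X : Type*} [MeasurableSpace X] [MeasurableSingletonClass X] [Countable X]
    (P : X → Measure (ℕ → X)) (κ : X → Measure X)
    (hprob : ∀ x, IsProbabilityMeasure (P x))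
    (hstart : ∀ x, P x {f | f 0 = x} = 1)
    (hmarkov : ∀ (x : X) (n : ℕ) (g : ℕ → X) (z : X),
      P x {f | (∀ i ≤ n, f i = g i) ∧ f (n + 1) = z}
        = κ (g n) {z} * P x {f | ∀ i ≤ n, f i = g i})
    (a b : X) (hab : a ≠ b) (k : ℕ) :
    P b {f | 1 ≤ k ∧ f k = a ∧ ∀ i, 1 ≤ i → i < k → f i ≠ a}
      ≤ P b {f | ∃ n, 1 ≤ n ∧ f n = a ∧ ∀ i, 1 ≤ i → i ≤ n → f i ≠ b} := by
  have hP : IsMarkovPathLaw P κ := ⟨hprob, hstart, hmarkov⟩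
  have := hprob b
  calc P b (firstHitAt a k) = P b (firstHitAt a k ∩ {f | f 0 = b}) :=
        (measure_inter_conull (hP.measure_compl_start b)).symm
    _ ≤ ∑ j ∈ Finset.range k,
          P b ({f | f j = b} ∩ shift j ⁻¹' firstHitAtBefore a b (k - j)) :=
        (measure_mono (firstHitAt_inter_subset hab k)).trans (measure_biUnion_finset_le _ _)
    _ = ∑ j ∈ Finset.range k, P b {f | f j = b} * P b (firstHitAtBefore a b (k - j)) :=
        Finset.sum_congr rfl fun j _ => hP.measure_inter_shift b b
          (dependsOn_setOf_apply_eq j b) (fun _ hf => hf) (dependsOn_firstHitAtBefore a b _)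
    _ ≤ ∑ j ∈ Finset.range k, P b (firstHitAtBefore a b (k - j)) :=
        Finset.sum_le_sum fun j _ => mul_le_of_le_one_left' prob_le_one
    _ ≤ ∑' m, P b (firstHitAtBefore a b m) := sum_range_sub_le_tsum _ k
    _ ≤ _ := tsum_measure_firstHitAtBefore_le _ a b

/-- **Lemma 4.6**. For any time-homogeneous Markov chain on a countable state space
(characterized by its transition kernel `κ` on cylinder events) started at `b`, and any
state `a ≠ b`: for every `k`, `P^b[τ(a) = k] ≤ P^b[τ(a) < τ(b)]`, where
`τ(x) = inf{n ≥ 1 : Z_n = x}`. -/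
theorem hitting_time_pointwise_bound
    {X : Type*} [MeasurableSpace X] [MeasurableSingletonClass X] [Countable X]
    (P : X → Measure (ℕ → X)) (κ : X → Measure X)
    (hκ : ∀ x, IsProbabilityMeasure (κ x))
    (hprob : ∀ x, IsProbabilityMeasure (P x))
    (hstart : ∀ x, P x {f | f 0 = x} = 1)
    (hmarkov : ∀ (x : X) (n : ℕ) (g : ℕ → X) (z : X),
      P x {f | (∀ i ≤ n, f i = g i) ∧ f (n + 1) = z}
        = κ (g n) {z} * P x {f | ∀ i ≤ n, f i = g i})
    (a b : X) (hab : a ≠ b) (k : ℕ) :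
    P b {f | 1 ≤ k ∧ f k = a ∧ ∀ i, 1 ≤ i → i < k → f i ≠ a}
      ≤ P b {f | ∃ n, 1 ≤ n ∧ f n = a ∧ ∀ i, 1 ≤ i → i ≤ n → f i ≠ b} :=
  hitting_time_pointwise_bound_general P κ hprob hstart hmarkov a b hab k
end
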